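/- arXiv:1101.1805 — 2 statements merged into one kernel-verified Lean document; each statement's English description precedes it below -/
import Mathlib

section
/- Let P, Q be integers such that the discriminant D = P^2 − 4Q of the characteristic equation of U(P,Q) is zero. Then the Lucas sequence U = U(P,Q), extended to ℤ by zero on negative indices, is 1-fold log-concave: (𝓛 U) n ≥ 0 for every n ∈ ℤ. -/
/-- The Lucas sequence of the first kind `U(P,Q)`. -/
def lucasU (P Q : ℤ) : ℕ → ℤ
  | 0 => 0
  | 1 => 1
  | n + 2 => P * lucasU P Q (n + 1) - Q * lucasU P Q n

/-- The Lucas sequence extended to `ℤ` by zero on negative indices, as a real sequence. -/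
def lucasUZ (P Q : ℤ) : ℤ → ℝ := fun n => if n < 0 then 0 else (lucasU P Q n.toNat : ℝ)

/-- The log-operator on sequences indexed by `ℤ`. -/
def logOp (a : ℤ → ℝ) : ℤ → ℝ := fun n => (a n) ^ 2 - a (n - 1) * a (n + 1)

/-!
Since `U` satisfies a second-order recurrence with constant coefficients, the Cassini-type
identity `U (n+1)^2 - U n * U (n+2) = Q^n` holds for all `P, Q`. A zero discriminant gives
`4 Q = P^2 ≥ 0`, so these values are nonnegative; at indices `n ≤ 0` the term `U (n-1)`
vanishes and `(𝓛 U) n = (U n)^2`.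
-/

section Lucas

variable (P Q : ℤ)

theorem lucasU_sq_sub_mul (n : ℕ) :
    lucasU P Q (n + 1) ^ 2 - lucasU P Q n * lucasU P Q (n + 2) = Q ^ n := by
  induction n with
  | zero => simp [lucasU]
  | succ n ih =>
    have h₂ : lucasU P Q (n + 2) = P * lucasU P Q (n + 1) - Q * lucasU P Q n := rfl
    have h₃ : lucasU P Q (n + 3) = P * lucasU P Q (n + 2) - Q * lucasU P Q (n + 1) := rfl
    show lucasU P Q (n + 2) ^ 2 - lucasU P Q (n + 1) * lucasU P Q (n + 3) = Q ^ (n + 1)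
    linear_combination -lucasU P Q (n + 1) * h₃ + lucasU P Q (n + 2) * h₂ + Q * ih

theorem lucasUZ_of_neg {n : ℤ} (hn : n < 0) : lucasUZ P Q n = 0 := if_pos hn

theorem lucasUZ_natCast (n : ℕ) : lucasUZ P Q n = lucasU P Q n := by
  simp [lucasUZ]

theorem logOp_lucasUZ_of_nonpos {n : ℤ} (hn : n ≤ 0) :
    logOp (lucasUZ P Q) n = lucasUZ P Q n ^ 2 := by
  simp [logOp, lucasUZ_of_neg P Q (show n - 1 < 0 by omega)]

theorem logOp_lucasUZ_natCast_add_one (n : ℕ) :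
    logOp (lucasUZ P Q) (n + 1) = (Q : ℝ) ^ n := by
  have h₂ : (n : ℤ) + 1 + 1 = (n + 2 : ℕ) := by push_cast; ring
  have h₁ : (n : ℤ) + 1 = (n + 1 : ℕ) := by push_cast; ring
  simp only [logOp, add_sub_cancel_right]
  rw [h₂, h₁, lucasUZ_natCast, lucasUZ_natCast, lucasUZ_natCast]
  exact_mod_cast lucasU_sq_sub_mul P Q n

theorem logOp_lucasUZ_nonneg (hQ : 0 ≤ Q) (n : ℤ) : 0 ≤ logOp (lucasUZ P Q) n := by
  rcases le_or_gt n 0 with hn | hn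
  · rw [logOp_lucasUZ_of_nonpos P Q hn]
    positivity
  · obtain ⟨k, rfl⟩ : ∃ k : ℕ, n = k + 1 := ⟨(n - 1).toNat, by omega⟩
    rw [logOp_lucasUZ_natCast_add_one]
    exact pow_nonneg (Int.cast_nonneg_iff.mpr hQ) k

end Lucas

theorem lucasU_zero_discriminant_log_concave (P Q : ℤ) (hD : P ^ 2 - 4 * Q = 0) :
    ∀ n : ℤ, 0 ≤ logOp (lucasUZ P Q) n :=
  logOp_lucasUZ_nonneg P Q (by linarith [sq_nonneg P])
end

section
/- Let P, Q be integers such that there exists an integer S with P = 2S and Q = S^2. Then the Lucas sequence U = U(P,Q), extended to ℤ by zero on negative indices, is infinitely log-concave: for every i ≥ 1 and every n ∈ ℤ, (𝓛^i U) n ≥ 0. -/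
/-!
With `P = 2S`, `Q = S²` the characteristic polynomial has the double root `S`, so `U n = n Sⁿ⁻¹`.
One application of `𝓛` turns this into the geometric sequence `S²⁽ⁿ⁻¹⁾` supported on `n ≥ 1`,
a second one into the unit impulse at `1`, and the unit impulse is a fixed point of `𝓛`.
-/

theorem logOp_single (k : ℤ) (c : ℝ) : logOp (Pi.single k c) = Pi.single k (c ^ 2) := by
  funext n
  rcases eq_or_ne n k with rfl | hn
  · simp [logOp]
  · have : n - 1 ≠ k ∨ n + 1 ≠ k := by omega
    rcases this with h | h <;> simp [logOp, hn, h]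

theorem logOp_shifted_geom (k : ℤ) (c r : ℝ) :
    logOp (fun n : ℤ => if n < k then 0 else c * r ^ (n - k).toNat) = Pi.single k (c ^ 2) := by
  funext n
  obtain hn | rfl | hn := lt_trichotomy n k
  · simp [logOp, hn, hn.ne, show n - 1 < k by omega]
  · simp [logOp]
  · obtain ⟨m, rfl⟩ : ∃ m : ℕ, n = k + (m + 1) := ⟨(n - k - 1).toNat, by omega⟩
    have h1 : (k + (m + 1) - 1 - k).toNat = m := by omega
    have h2 : (k + (m + 1) + 1 - k).toNat = m + 2 := by omega
    simp [logOp, hn.ne', h1, h2, show ¬ k + (m + 1) < k by omega,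
      show ¬ k + (m + 1) - 1 < k by omega, show ¬ k + (m + 1) + 1 < k by omega]
    ring

theorem logOp_mul_pow_pred (r : ℝ) :
    logOp (fun n : ℤ => if n < 0 then 0 else n * r ^ (n.toNat - 1)) =
      fun n : ℤ => if n < 1 then 0 else (r ^ 2) ^ (n - 1).toNat := by
  funext n
  obtain hn | rfl | hn := lt_trichotomy n 0
  · simp [logOp, hn, show n - 1 < 0 by omega, show n < 1 by omega]
  · simp [logOp]
  · obtain ⟨m, rfl⟩ : ∃ m : ℕ, n = m + 1 := ⟨(n - 1).toNat, by omega⟩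
    have h1 : ((m : ℤ) + 1 + 1).toNat = m + 2 := by omega
    simp [logOp, h1, show ¬ (m : ℤ) + 1 < 1 by omega, show ¬ (m : ℤ) + 1 + 1 < 0 by omega,
      show ¬ (m : ℤ) + 1 < 0 by omega, show ¬ (m : ℤ) < 0 by omega]
    rcases m with _ | m
    · simp
    · simp only [Nat.add_one_sub_one]
      push_cast
      ring

theorem lucasU_two_mul_sq (S : ℤ) : ∀ n : ℕ, lucasU (2 * S) (S ^ 2) n = n * S ^ (n - 1)
  | 0 => by simp [lucasU]
  | 1 => by simp [lucasU]
  | n + 2 => by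
    rw [lucasU, lucasU_two_mul_sq S (n + 1), lucasU_two_mul_sq S n]
    rcases n with _ | n
    · ring
    · simp only [Nat.add_one_sub_one]
      push_cast
      ring

theorem lucasUZ_two_mul_sq (S : ℤ) :
    lucasUZ (2 * S) (S ^ 2) = fun n : ℤ => if n < 0 then 0 else n * (S : ℝ) ^ (n.toNat - 1) := by
  funext n
  unfold lucasUZ
  split_ifs with hn
  · rfl
  · obtain ⟨m, rfl⟩ := Int.eq_ofNat_of_zero_le (not_lt.mp hn)
    simp [lucasU_two_mul_sq]

theorem lucasU_zero_discriminant_inf_log_concave (P Q : ℤ)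
    (hS : ∃ S : ℤ, P = 2 * S ∧ Q = S ^ 2) :
    ∀ i : ℕ, 1 ≤ i → ∀ n : ℤ, 0 ≤ (logOp^[i] (lucasUZ P Q)) n := by
  obtain ⟨S, rfl, rfl⟩ := hS
  have h₁ : logOp (lucasUZ (2 * S) (S ^ 2)) =
      fun n : ℤ => if n < 1 then 0 else ((S : ℝ) ^ 2) ^ (n - 1).toNat := by
    rw [lucasUZ_two_mul_sq, logOp_mul_pow_pred]
  have h₂ : logOp^[2] (lucasUZ (2 * S) (S ^ 2)) = Pi.single 1 1 := by
    rw [Function.iterate_succ_apply', Function.iterate_one, h₁]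
    simpa using logOp_shifted_geom 1 1 ((S : ℝ) ^ 2)
  have hfix : logOp (Pi.single 1 1) = Pi.single 1 1 := by rw [logOp_single, one_pow]
  intro i hi n
  obtain rfl | hi := hi.eq_or_lt
  · rw [Function.iterate_one, h₁]
    dsimp only
    split_ifs <;> positivity
  · obtain ⟨j, rfl⟩ := Nat.exists_eq_add_of_le' hi
    rw [Function.iterate_add_apply, h₂, Function.iterate_fixed hfix]
    exact (Pi.single_nonneg.mpr zero_le_one : (0 : ℤ → ℝ) ≤ Pi.single 1 1) n
end
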